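/- Conversion from GDP to DP: let A be a randomized mechanism from datasets to probability distributions on an output space Y, let μ ≥ 0, and suppose A satisfies μ-GDP, i.e., for every pair of neighboring datasets D, D' and every a ∈ [0,1], T(A(D), A(D'))(a) ≥ Φ(z − μ) for every real z with Φ(z) = 1 − a, where T is the trade-off function and Φ is the standard normal cumulative distribution function. Then for every ε > 0, A satisfies (ε, Φ(−ε/μ + μ/2) − e^ε · Φ(−ε/μ − μ/2))-DP. -/

import Mathlib

open MeasureTheory

/-- The cumulative distribution function of the standard normal distribution `N(0,1)`. -/
noncomputable def stdNormalCDF (z : ℝ) : ℝ :=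
  ∫ t in Set.Iic z, (Real.sqrt (2 * Real.pi))⁻¹ * Real.exp (-t ^ 2 / 2)

/-- The trade-off function `T(P,Q)(a) = inf { 1 − E_Q[φ] : φ : Y → [0,1] measurable,
E_P[φ] ≤ a }` between two probability measures `P` and `Q`. -/
noncomputable def tradeOff {Y : Type*} [MeasurableSpace Y] (P Q : Measure Y) (a : ℝ) : ℝ :=
  sInf { b : ℝ | ∃ φ : Y → ℝ, Measurable φ ∧ (∀ y, φ y ∈ Set.Icc (0 : ℝ) 1) ∧
    (∫ y, φ y ∂P) ≤ a ∧ b = 1 - ∫ y, φ y ∂Q }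

/-- The standard normal density. -/
noncomputable def stdPdf (t : ℝ) : ℝ := (Real.sqrt (2 * Real.pi))⁻¹ * Real.exp (-t ^ 2 / 2)

lemma stdPdf_pos (t : ℝ) : 0 < stdPdf t := by
  have h2π : (0:ℝ) < 2 * Real.pi := by positivity
  have := Real.sqrt_pos.2 h2π
  unfold stdPdf
  positivity

lemma stdPdf_continuous : Continuous stdPdf := by
  unfold stdPdf; fun_prop

lemma integrable_stdPdf : Integrable stdPdf := by
  have h : Integrable (fun t : ℝ => Real.exp (-(1/2 : ℝ) * t ^ 2)) :=
    integrable_exp_neg_mul_sq (by norm_num)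
  have := h.const_mul (Real.sqrt (2 * Real.pi))⁻¹
  convert this using 2 with t
  unfold stdPdf
  ring_nf

lemma integral_stdPdf : ∫ t, stdPdf t = 1 := by
  have h2π : (0:ℝ) < 2 * Real.pi := by positivity
  have h : ∫ t : ℝ, Real.exp (-(1/2 : ℝ) * t ^ 2) = Real.sqrt (Real.pi / (1/2)) :=
    integral_gaussian (1/2)
  have heq : ∀ t : ℝ, stdPdf t = (Real.sqrt (2 * Real.pi))⁻¹ * Real.exp (-(1/2 : ℝ) * t ^ 2) := by
    intro t; unfold stdPdf; ring_nf
  calc ∫ t, stdPdf t = ∫ t : ℝ, (Real.sqrt (2 * Real.pi))⁻¹ * Real.exp (-(1/2 : ℝ) * t ^ 2) := by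
        simp_rw [heq]
    _ = (Real.sqrt (2 * Real.pi))⁻¹ * Real.sqrt (Real.pi / (1/2)) := by
        rw [MeasureTheory.integral_const_mul, h]
    _ = 1 := by
        have : Real.pi / (1/2) = 2 * Real.pi := by ring
        rw [this]
        exact inv_mul_cancel₀ (ne_of_gt (Real.sqrt_pos.2 h2π))

lemma stdNormalCDF_eq (z : ℝ) : stdNormalCDF z = ∫ t in Set.Iic z, stdPdf t := rfl

lemma stdNormalCDF_nonneg (z : ℝ) : 0 ≤ stdNormalCDF z := by
  rw [stdNormalCDF_eq]
  exact setIntegral_nonneg measurableSet_Iic (fun t _ => (stdPdf_pos t).le)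

lemma stdNormalCDF_le_one (z : ℝ) : stdNormalCDF z ≤ 1 := by
  rw [stdNormalCDF_eq, ← integral_stdPdf]
  exact setIntegral_le_integral integrable_stdPdf
    (Filter.Eventually.of_forall fun t => (stdPdf_pos t).le)

lemma hasDerivAt_stdNormalCDF (z : ℝ) : HasDerivAt stdNormalCDF (stdPdf z) z := by
  have key : ∀ x : ℝ, stdNormalCDF x = stdNormalCDF 0 + ∫ t in (0:ℝ)..x, stdPdf t := by
    intro x
    have := intervalIntegral.integral_Iic_sub_Iic (f := stdPdf) (μ := volume) (a := 0) (b := x)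
      integrable_stdPdf.integrableOn integrable_stdPdf.integrableOn
    rw [stdNormalCDF_eq, stdNormalCDF_eq]
    linarith [this]
  have hD : HasDerivAt (fun x => stdNormalCDF 0 + ∫ t in (0:ℝ)..x, stdPdf t) (stdPdf z) z := by
    refine (HasDerivAt.const_add _ ?_)
    exact intervalIntegral.integral_hasDerivAt_right
      integrable_stdPdf.intervalIntegrable
      stdPdf_continuous.stronglyMeasurable.stronglyMeasurableAtFilter
      stdPdf_continuous.continuousAt
  have : (fun x => stdNormalCDF 0 + ∫ t in (0:ℝ)..x, stdPdf t) = stdNormalCDF :=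
    funext fun x => (key x).symm
  rwa [this] at hD

lemma continuous_stdNormalCDF : Continuous stdNormalCDF := by
  have : Differentiable ℝ stdNormalCDF := fun z => (hasDerivAt_stdNormalCDF z).differentiableAt
  exact this.continuous

lemma stdNormalCDF_tendsto_atTop :
    Filter.Tendsto stdNormalCDF Filter.atTop (nhds 1) := by
  have h := tendsto_setIntegral_of_monotone (μ := volume) (f := stdPdf)
    (s := fun z : ℝ => Set.Iic z) (fun z => measurableSet_Iic)
    (fun a b hab => Set.Iic_subset_Iic.2 hab)
    (by rw [Set.iUnion_Iic]; exact integrable_stdPdf.integrableOn)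
  rw [Set.iUnion_Iic, MeasureTheory.setIntegral_univ, integral_stdPdf] at h
  exact h

lemma stdNormalCDF_neg_tendsto :
    Filter.Tendsto (fun z : ℝ => stdNormalCDF (-z)) Filter.atTop (nhds 0) := by
  have hempty : ⋂ z : ℝ, Set.Iic (-z) = ∅ := by
    ext x
    simp only [Set.mem_iInter, Set.mem_Iic, Set.mem_empty_iff_false, iff_false, not_forall]
    exact ⟨-(x - 1), by push_neg; linarith⟩
  have h := tendsto_setIntegral_of_antitone (μ := volume) (f := stdPdf)
    (s := fun z : ℝ => Set.Iic (-z)) (fun z => measurableSet_Iic)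
    (fun a b hab => Set.Iic_subset_Iic.2 (by linarith))
    ⟨0, integrable_stdPdf.integrableOn⟩
  rw [hempty] at h
  simp only [Measure.restrict_empty, integral_zero_measure] at h
  exact h

lemma stdNormalCDF_surj {t : ℝ} (ht0 : 0 < t) (ht1 : t < 1) : ∃ z, stdNormalCDF z = t := by
  obtain ⟨b, hb⟩ := ((tendsto_order.1 stdNormalCDF_tendsto_atTop).1 t ht1).exists
  obtain ⟨c, hc⟩ := ((tendsto_order.1 stdNormalCDF_neg_tendsto).2 t ht0).exists
  have : t ∈ Set.uIcc (stdNormalCDF (-c)) (stdNormalCDF b) :=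
    Set.mem_uIcc.2 (Or.inl ⟨hc.le, hb.le⟩)
  obtain ⟨z, _, hz⟩ := intermediate_value_uIcc (continuous_stdNormalCDF.continuousOn) this
  exact ⟨z, hz⟩

/-- Key analytic inequality for `μ > 0`. -/
lemma key_ineq {μ ε : ℝ} (hμ : 0 < μ) (hε : 0 < ε) (z : ℝ) :
    stdNormalCDF z - Real.exp ε * stdNormalCDF (z - μ) ≤
      stdNormalCDF (-ε / μ + μ / 2) - Real.exp ε * stdNormalCDF (-ε / μ - μ / 2) := by
  set c : ℝ := -ε / μ + μ / 2 with hc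
  have hcμ : c - μ = -ε / μ - μ / 2 := by rw [hc]; ring
  set g : ℝ → ℝ := fun x => stdNormalCDF x - Real.exp ε * stdNormalCDF (x - μ) with hg
  have hderiv : ∀ x : ℝ, HasDerivAt g (stdPdf x - Real.exp ε * stdPdf (x - μ)) x := by
    intro x
    have h1 := hasDerivAt_stdNormalCDF x
    have h2 : HasDerivAt (fun y => stdNormalCDF (y - μ)) (stdPdf (x - μ)) x := by
      have := (hasDerivAt_stdNormalCDF (x - μ)).comp x ((hasDerivAt_id x).sub_const μ)
      simp only [mul_one] at this
      exact this
    exact h1.sub (h2.const_mul _)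
  have hdiff : Differentiable ℝ g := fun x => (hderiv x).differentiableAt
  have hderiv_eq : ∀ x : ℝ, deriv g x = stdPdf x - Real.exp ε * stdPdf (x - μ) :=
    fun x => (hderiv x).deriv
  -- sign of the derivative
  have hsign : ∀ x : ℝ, (x ≤ c → 0 ≤ deriv g x) ∧ (c ≤ x → deriv g x ≤ 0) := by
    intro x
    have hexp : Real.exp ε * stdPdf (x - μ) =
        (Real.sqrt (2 * Real.pi))⁻¹ * Real.exp (ε + -(x - μ) ^ 2 / 2) := by
      unfold stdPdf; rw [Real.exp_add]; ring
    have hsqrt : (0:ℝ) < (Real.sqrt (2 * Real.pi))⁻¹ := by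
      have : (0:ℝ) < 2 * Real.pi := by positivity
      exact inv_pos.2 (Real.sqrt_pos.2 this)
    constructor
    · intro hx
      rw [hderiv_eq, hexp]
      unfold stdPdf
      have hle : ε + -(x - μ) ^ 2 / 2 ≤ -x ^ 2 / 2 := by
        have h1 : μ * x ≤ μ * c := mul_le_mul_of_nonneg_left hx hμ.le
        have h2 : μ * c = -ε + μ ^ 2 / 2 := by
          rw [hc]; field_simp
        have h12 : μ * x ≤ -ε + μ ^ 2 / 2 := h1.trans_eq h2
        have h3 : (x - μ) ^ 2 = x ^ 2 - 2 * (μ * x) + μ ^ 2 := by ring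
        linarith [h12, h3]
      have := Real.exp_le_exp.2 hle
      nlinarith
    · intro hx
      rw [hderiv_eq, hexp]
      unfold stdPdf
      have hle : -x ^ 2 / 2 ≤ ε + -(x - μ) ^ 2 / 2 := by
        have h1 : μ * c ≤ μ * x := mul_le_mul_of_nonneg_left hx hμ.le
        have h2 : μ * c = -ε + μ ^ 2 / 2 := by
          rw [hc]; field_simp
        have h12 : -ε + μ ^ 2 / 2 ≤ μ * x := h2 ▸ h1
        have h3 : (x - μ) ^ 2 = x ^ 2 - 2 * (μ * x) + μ ^ 2 := by ring
        linarith [h12, h3]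
      have := Real.exp_le_exp.2 hle
      nlinarith
  rcases le_total z c with hz | hz
  · have hmono : MonotoneOn g (Set.Iic c) := by
      refine monotoneOn_of_deriv_nonneg (convex_Iic c) hdiff.continuous.continuousOn
        (hdiff.differentiableOn) ?_
      intro x hx
      exact (hsign x).1 (le_of_lt (by simpa using hx))
    have := hmono (Set.mem_Iic.2 hz) (Set.mem_Iic.2 le_rfl) hz
    simpa [hg, hcμ] using this
  · have hanti : AntitoneOn g (Set.Ici c) := by
      refine antitoneOn_of_deriv_nonpos (convex_Ici c) hdiff.continuous.continuousOn
        (hdiff.differentiableOn) ?_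
      intro x hx
      exact (hsign x).2 (le_of_lt (by simpa using hx))
    have := hanti (Set.mem_Ici.2 le_rfl) (Set.mem_Ici.2 hz) hz
    simpa [hg, hcμ] using this

/-- Using the indicator of `Sᶜ` as a test function. -/
lemma tradeOff_le_prob {Y : Type*} [MeasurableSpace Y] (P Q : Measure Y)
    [IsProbabilityMeasure P] [IsProbabilityMeasure Q] {S : Set Y} (hS : MeasurableSet S)
    {a : ℝ} (ha : (P Sᶜ).toReal ≤ a) : tradeOff P Q a ≤ (Q S).toReal := by
  have hint : ∀ (μ : Measure Y) [IsProbabilityMeasure μ],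
      ∫ y, Sᶜ.indicator (fun _ => (1:ℝ)) y ∂μ = (μ Sᶜ).toReal := by
    intro μ _
    exact MeasureTheory.integral_indicator_one (μ := μ) hS.compl
  have hmem : (Q S).toReal ∈ { b : ℝ | ∃ φ : Y → ℝ, Measurable φ ∧
      (∀ y, φ y ∈ Set.Icc (0 : ℝ) 1) ∧ (∫ y, φ y ∂P) ≤ a ∧ b = 1 - ∫ y, φ y ∂Q } := by
    refine ⟨Sᶜ.indicator (fun _ => (1:ℝ)), measurable_const.indicator hS.compl, ?_, ?_, ?_⟩
    · intro y
      by_cases hy : y ∈ Sᶜ <;> simp [Set.indicator, hy]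
    · rw [hint P]; exact ha
    · rw [hint Q]
      have hcompl : Q Sᶜ = 1 - Q S := prob_compl_eq_one_sub hS
      have hQS : Q S ≤ 1 := prob_le_one
      rw [hcompl, ENNReal.toReal_sub_of_le hQS (by simp)]
      simp
  have hbdd : BddBelow { b : ℝ | ∃ φ : Y → ℝ, Measurable φ ∧
      (∀ y, φ y ∈ Set.Icc (0 : ℝ) 1) ∧ (∫ y, φ y ∂P) ≤ a ∧ b = 1 - ∫ y, φ y ∂Q } := by
    refine ⟨0, fun b hb => ?_⟩
    obtain ⟨φ, hφm, hφ01, _, hbeq⟩ := hb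
    have : ∫ y, φ y ∂Q ≤ 1 := by
      have h1 : ∫ y, (1:ℝ) ∂Q = 1 := by simp
      rw [← h1]
      exact integral_mono_of_nonneg (Filter.Eventually.of_forall fun y => (hφ01 y).1)
        (integrable_const 1) (Filter.Eventually.of_forall fun y => (hφ01 y).2)
    linarith [hbeq ▸ (by linarith : (0:ℝ) ≤ 1 - ∫ y, φ y ∂Q)]
  exact csInf_le hbdd hmem

/-- Conversion from GDP to DP. -/
theorem GDP_to_DP {D Y : Type*} [MeasurableSpace Y]
    (A : D → Measure Y) [∀ d, IsProbabilityMeasure (A d)]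
    (N : D → D → Prop) (μ : ℝ) (hμ : 0 ≤ μ)
    (hGDP : ∀ d d', N d d' → ∀ a ∈ Set.Icc (0 : ℝ) 1, ∀ z : ℝ,
      stdNormalCDF z = 1 - a → stdNormalCDF (z - μ) ≤ tradeOff (A d) (A d') a) :
    ∀ ε : ℝ, 0 < ε →
      ∀ d d', N d d' → ∀ S : Set Y, MeasurableSet S →
        A d S ≤
          ENNReal.ofReal (Real.exp ε) * A d' S
            + ENNReal.ofReal
                (stdNormalCDF (-ε / μ + μ / 2)
                  - Real.exp ε * stdNormalCDF (-ε / μ - μ / 2)) := by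
  intro ε hε d d' hN S hS
  obtain ⟨p, hp⟩ : ∃ p : ℝ, ((A d) S).toReal = p := ⟨_, rfl⟩
  obtain ⟨q, hq⟩ : ∃ q : ℝ, ((A d') S).toReal = q := ⟨_, rfl⟩
  set δ : ℝ := stdNormalCDF (-ε / μ + μ / 2) - Real.exp ε * stdNormalCDF (-ε / μ - μ / 2)
    with hδ
  clear_value δ
  have hq0 : 0 ≤ q := hq ▸ ENNReal.toReal_nonneg
  have hp1 : p ≤ 1 := by
    rw [← hp]
    have h1 : A d S ≤ 1 := prob_le_one
    have := ENNReal.toReal_mono (by simp) h1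
    simpa using this
  have hexp1 : (1:ℝ) ≤ Real.exp ε := by
    rw [show (1:ℝ) = Real.exp 0 by simp]
    exact Real.exp_le_exp.2 hε.le
  -- core: GDP gives a lower bound on Q S
  have hcore : ∀ z : ℝ, stdNormalCDF z ≤ p → stdNormalCDF (z - μ) ≤ q := by
    intro z hz
    have hmem : (1 - stdNormalCDF z) ∈ Set.Icc (0:ℝ) 1 :=
      ⟨by linarith [stdNormalCDF_le_one z], by linarith [stdNormalCDF_nonneg z]⟩
    have h1 := hGDP d d' hN (1 - stdNormalCDF z) hmem z (by ring)
    have hcompl : ((A d) Sᶜ).toReal = 1 - p := by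
      rw [prob_compl_eq_one_sub hS, ENNReal.toReal_sub_of_le prob_le_one (by simp), hp]
      simp
    have h2 : tradeOff (A d) (A d') (1 - stdNormalCDF z) ≤ q := by
      rw [← hq]
      exact tradeOff_le_prob (A d) (A d') hS (by rw [hcompl]; linarith)
    linarith
  -- key pointwise inequality
  have hkey : ∀ z : ℝ, stdNormalCDF z ≤ Real.exp ε * stdNormalCDF (z - μ) + max δ 0 := by
    intro z
    rcases eq_or_lt_of_le hμ with hμ0 | hμpos
    · have hz0 : z - μ = z := by rw [← hμ0]; ring
      rw [hz0]
      have h0 := stdNormalCDF_nonneg z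
      nlinarith [le_max_right δ 0]
    · have h1 := key_ineq hμpos hε z
      rw [← hδ] at h1
      have h2 := le_max_left δ 0
      linarith
  -- combine
  have hfinal : p ≤ Real.exp ε * q + max δ 0 := by
    by_contra hcon
    push_neg at hcon
    have hR0 : 0 ≤ Real.exp ε * q + max δ 0 := by
      have h1 : (0:ℝ) ≤ Real.exp ε * q := mul_nonneg (Real.exp_pos ε).le hq0
      have h2 := le_max_right δ 0
      linarith
    obtain ⟨z, hzt⟩ := stdNormalCDF_surj
      (t := (Real.exp ε * q + max δ 0 + p) / 2) (by linarith) (by linarith)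
    have hzp : stdNormalCDF z ≤ p := by rw [hzt]; linarith
    have hzq := hcore z hzp
    have h1 := hkey z
    have hmul : Real.exp ε * stdNormalCDF (z - μ) ≤ Real.exp ε * q :=
      mul_le_mul_of_nonneg_left hzq (Real.exp_pos ε).le
    rw [hzt] at h1
    linarith
  -- transfer to ℝ≥0∞
  have hPfin : A d S ≠ ⊤ := (measure_lt_top (A d) S).ne
  have hQfin : A d' S ≠ ⊤ := (measure_lt_top (A d') S).ne
  have hPS : A d S = ENNReal.ofReal p := by rw [← hp, ENNReal.ofReal_toReal hPfin]
  have hQS : A d' S = ENNReal.ofReal q := by rw [← hq, ENNReal.ofReal_toReal hQfin]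
  rw [hPS, hQS]
  calc ENNReal.ofReal p ≤ ENNReal.ofReal (Real.exp ε * q + max δ 0) :=
        ENNReal.ofReal_le_ofReal hfinal
    _ = ENNReal.ofReal (Real.exp ε * q) + ENNReal.ofReal (max δ 0) :=
        ENNReal.ofReal_add (mul_nonneg (Real.exp_pos ε).le hq0) (le_max_right δ 0)
    _ = ENNReal.ofReal (Real.exp ε) * ENNReal.ofReal q + ENNReal.ofReal δ := by
        rw [ENNReal.ofReal_mul (Real.exp_pos ε).le]
        congr 1
        rcases le_total δ 0 with h | h
        · rw [max_eq_right h, ENNReal.ofReal_zero, eq_comm, ENNReal.ofReal_eq_zero]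
          exact h
        · rw [max_eq_left h]
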